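/- arXiv:2601.18000 — 2 statements merged into one kernel-verified Lean document; each statement's English description precedes it below -/
import Mathlib

section
/- Fix a type-indexed family of equivalence relations on closed simply-typed λ-terms induced by interpretation in finite sets: for a finite set Q, M ∼_Q N iff ⟦M⟧_Q = ⟦N⟧_Q in the standard set-theoretic model with base type interpreted as Q. Then for any two finite sets Q, Q' with |Q'| ≥ |Q|, and any type A and closed terms M, N of type A, ⟦M⟧_{Q'} = ⟦N⟧_{Q'} implies ⟦M⟧_Q = ⟦N⟧_Q. -/
/-- Simple types over a single base type, with unit, products and arrows. -/
inductive Ty : Type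
  | base : Ty
  | unit : Ty
  | prod : Ty → Ty → Ty
  | arrow : Ty → Ty → Ty

/-- Standard set-theoretic interpretation of simple types with base type interpreted as `Q`. -/
def Ty.interp (Q : Type) : Ty → Type
  | .base => Q
  | .unit => Unit
  | .prod A B => A.interp Q × B.interp Q
  | .arrow A B => A.interp Q → B.interp Q

/-- De Bruijn variables. -/
inductive Var : List Ty → Ty → Type
  | vz {Γ A} : Var (A :: Γ) A
  | vs {Γ A B} : Var Γ A → Var (B :: Γ) A

/-- Intrinsically typed terms of the simply typed λ-calculus with unit and products. -/
inductive Tm : List Ty → Ty → Type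
  | var {Γ A} : Var Γ A → Tm Γ A
  | lam {Γ A B} : Tm (A :: Γ) B → Tm Γ (.arrow A B)
  | app {Γ A B} : Tm Γ (.arrow A B) → Tm Γ A → Tm Γ B
  | pair {Γ A B} : Tm Γ A → Tm Γ B → Tm Γ (.prod A B)
  | fst {Γ A B} : Tm Γ (.prod A B) → Tm Γ A
  | snd {Γ A B} : Tm Γ (.prod A B) → Tm Γ B
  | star {Γ} : Tm Γ .unit

/-- Semantic environments. -/
def Env (Q : Type) : List Ty → Type
  | [] => Unit
  | A :: Γ => Ty.interp Q A × Env Q Γ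

def Var.eval {Q : Type} : ∀ {Γ A}, Var Γ A → Env Q Γ → Ty.interp Q A
  | _, _, .vz, env => env.1
  | _, _, .vs v, env => v.eval env.2

/-- Denotation of a term in the standard model over `Q`. -/
def Tm.eval {Q : Type} : ∀ {Γ A}, Tm Γ A → Env Q Γ → Ty.interp Q A
  | _, _, .var v, env => v.eval env
  | _, _, .lam t, env => fun x => t.eval (x, env)
  | _, _, .app t u, env => t.eval env (u.eval env)
  | _, _, .pair t u, env => (t.eval env, u.eval env)
  | _, _, .fst t, env => (t.eval env).1
  | _, _, .snd t, env => (t.eval env).2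
  | _, _, .star, _ => ()

/-!
A map `s : Q' → Q` induces a logical relation `R` between the models over `Q` and over `Q'`,
which is `x = s y` at the base type. Every closed term is related to itself across the two
models. If `s` is surjective, `R` is left-unique at every type: `x` is determined by any `y`
related to it. So `⟦M⟧_{Q'} = ⟦N⟧_{Q'}` forces `⟦M⟧_Q = ⟦N⟧_Q`. When `|Q| ≤ |Q'|` and `Q` is
nonempty, a surjection `Q' ↠ Q` is obtained by inverting an injection `Q ↪ Q'`; when `Q` is
empty, every `⟦A⟧_Q` is a subsingleton.
-/

open Relator

namespace Ty

lemma interp_subsingleton (Q : Type) [Subsingleton Q] : ∀ A : Ty, Subsingleton (A.interp Q)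
  | .base => inferInstanceAs (Subsingleton Q)
  | .unit => inferInstanceAs (Subsingleton Unit)
  | .prod A B =>
    have := interp_subsingleton Q A
    have := interp_subsingleton Q B
    inferInstanceAs (Subsingleton (_ × _))
  | .arrow _ B =>
    have := interp_subsingleton Q B
    inferInstanceAs (Subsingleton (_ → _))

lemma interp_nonempty (Q : Type) [Nonempty Q] : ∀ A : Ty, Nonempty (A.interp Q)
  | .base => inferInstanceAs (Nonempty Q)
  | .unit => ⟨()⟩
  | .prod A B =>
    have := interp_nonempty Q A
    have := interp_nonempty Q B
    inferInstanceAs (Nonempty (_ × _))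
  | .arrow _ B =>
    have := interp_nonempty Q B
    inferInstanceAs (Nonempty (_ → _))

variable {Q Q' : Type} (s : Q' → Q)

def LogRel : ∀ A : Ty, A.interp Q → A.interp Q' → Prop
  | .base, x, y => x = s y
  | .unit, _, _ => True
  | .prod A B, x, y => LogRel A x.1 y.1 ∧ LogRel B x.2 y.2
  | .arrow A B, f, g => ∀ x y, LogRel A x y → LogRel B (f x) (g y)

variable {s}

/-- Left-uniqueness and left-totality have to be proved together: at an arrow type each one
needs the other at the domain. -/
lemma logRel_leftUnique_and_leftTotal [Nonempty Q'] (hs : s.Surjective) :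
    ∀ A : Ty, LeftUnique (LogRel s A) ∧ LeftTotal (LogRel s A)
  | .base => ⟨fun _ _ _ hx hx' => hx.trans hx'.symm, fun x => (hs x).imp fun _ h => h.symm⟩
  | .unit => ⟨fun _ _ _ _ _ => rfl, fun _ => ⟨(), trivial⟩⟩
  | .prod A B => by
    obtain ⟨uniqA, totA⟩ := logRel_leftUnique_and_leftTotal hs A
    obtain ⟨uniqB, totB⟩ := logRel_leftUnique_and_leftTotal hs B
    refine ⟨fun _ _ _ hx hx' => Prod.ext (uniqA hx.1 hx'.1) (uniqB hx.2 hx'.2), fun x => ?_⟩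
    obtain ⟨y₁, h₁⟩ := totA x.1
    obtain ⟨y₂, h₂⟩ := totB x.2
    exact ⟨(y₁, y₂), h₁, h₂⟩
  | .arrow A B => by
    obtain ⟨uniqA, totA⟩ := logRel_leftUnique_and_leftTotal hs A
    obtain ⟨uniqB, totB⟩ := logRel_leftUnique_and_leftTotal hs B
    refine ⟨fun f f' g hf hf' => funext fun x => ?_, fun f => ?_⟩
    · obtain ⟨y, hy⟩ := totA x
      exact uniqB (hf x y hy) (hf' x y hy)
    · classical
      have := interp_nonempty Q' B
      choose lift hlift using totB
      -- By `uniqA`, a `y` related to some `x` determines it; other `y`s are sent anywhere.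
      refine ⟨fun y => if h : ∃ x, LogRel s A x y then lift (f h.choose) else Classical.arbitrary _,
        fun x y hxy => ?_⟩
      have h : ∃ x, LogRel s A x y := ⟨x, hxy⟩
      beta_reduce
      rw [dif_pos h, uniqA hxy h.choose_spec]
      exact hlift _

lemma logRel_leftUnique [Nonempty Q'] (hs : s.Surjective) (A : Ty) : LeftUnique (LogRel s A) :=
  (logRel_leftUnique_and_leftTotal hs A).1

end Ty

def Env.LogRel {Q Q' : Type} (s : Q' → Q) : ∀ Γ : List Ty, Env Q Γ → Env Q' Γ → Prop
  | [], _, _ => True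
  | A :: Γ, e, e' => Ty.LogRel s A e.1 e'.1 ∧ Env.LogRel s Γ e.2 e'.2

variable {Q Q' : Type} {s : Q' → Q}

lemma Var.logRel_eval : ∀ {Γ A} (v : Var Γ A) {e : Env Q Γ} {e' : Env Q' Γ},
    Env.LogRel s Γ e e' → Ty.LogRel s A (v.eval e) (v.eval e')
  | _, _, .vz, _, _, he => he.1
  | _, _, .vs v, _, _, he => v.logRel_eval he.2

lemma Tm.logRel_eval : ∀ {Γ A} (t : Tm Γ A) {e : Env Q Γ} {e' : Env Q' Γ},
    Env.LogRel s Γ e e' → Ty.LogRel s A (t.eval e) (t.eval e')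
  | _, _, .var v, _, _, he => v.logRel_eval he
  | _, _, .lam t, _, _, he => fun _ _ hxy => t.logRel_eval ⟨hxy, he⟩
  | _, _, .app t u, _, _, he => t.logRel_eval he _ _ (u.logRel_eval he)
  | _, _, .pair t u, _, _, he => ⟨t.logRel_eval he, u.logRel_eval he⟩
  | _, _, .fst t, _, _, he => (t.logRel_eval he).1
  | _, _, .snd t, _, _, he => (t.logRel_eval he).2
  | _, _, .star, _, _, _ => trivial

lemma Tm.eval_eq_of_eval_eq_of_surjective [Nonempty Q'] (hs : s.Surjective) {A : Ty}
    (M N : Tm [] A) (h : M.eval (Q := Q') () = N.eval (Q := Q') ()) :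
    M.eval (Q := Q) () = N.eval (Q := Q) () := by
  have hM : Ty.LogRel s A (M.eval ()) (N.eval ()) := h ▸ M.logRel_eval (e := ()) trivial
  exact Ty.logRel_leftUnique hs A hM (N.logRel_eval trivial)

/-- If two closed terms have the same denotation over a finite set `Q'`, then they have the
same denotation over any finite set `Q` with `|Q| ≤ |Q'|`. -/
theorem eval_eq_of_eval_eq_of_card_le (Q Q' : Type) [Fintype Q] [Fintype Q']
    (hcard : Fintype.card Q ≤ Fintype.card Q') (A : Ty) (M N : Tm [] A)
    (h : M.eval (Q := Q') () = N.eval (Q := Q') ()) :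
    M.eval (Q := Q) () = N.eval (Q := Q) () := by
  rcases isEmpty_or_nonempty Q with _ | hQ
  · have := Ty.interp_subsingleton Q A
    exact Subsingleton.elim _ _
  · obtain ⟨i⟩ : Nonempty (Q ↪ Q') := Function.Embedding.nonempty_iff_card_le.mpr hcard
    have : Nonempty Q' := hQ.map i
    exact Tm.eval_eq_of_eval_eq_of_surjective (Function.invFun_surjective i.injective) M N h
end

section
/- Let X and Y be Stone spaces and π : X × Y → X the projection. Define, for clopen W ⊆ X × Y, π_∀(W) = {x ∈ X | ∀ y ∈ Y, (x,y) ∈ W}. Then π_∀(W) is clopen, and π_∀ is right adjoint to the preimage map π⁻¹ on the posets of clopen sets: for clopens U ⊆ X and W ⊆ X × Y, π⁻¹(U) ⊆ W if and only if U ⊆ π_∀(W). -/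
/-! `π_∀(W)` is the complement of `π(Wᶜ)`. The projection `π` is open, and it is closed because
`Y` is compact, so `π(Wᶜ)` is clopen together with `W`. The adjunction is pure set theory. -/

theorem setOf_forall_mem_eq_compl_image_fst_compl {X Y : Type*} (W : Set (X × Y)) :
    {x : X | ∀ y : Y, (x, y) ∈ W} = (Prod.fst '' Wᶜ)ᶜ := by
  ext x
  simp

theorem IsClosed.setOf_forall_mem {X Y : Type*} [TopologicalSpace X] [TopologicalSpace Y]
    {W : Set (X × Y)} (hW : IsClosed W) : IsClosed {x : X | ∀ y : Y, (x, y) ∈ W} := by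
  rw [setOf_forall_mem_eq_compl_image_fst_compl]
  exact (isOpenMap_fst _ hW.isOpen_compl).isClosed_compl

theorem IsOpen.setOf_forall_mem {X Y : Type*} [TopologicalSpace X] [TopologicalSpace Y]
    [CompactSpace Y] {W : Set (X × Y)} (hW : IsOpen W) :
    IsOpen {x : X | ∀ y : Y, (x, y) ∈ W} := by
  rw [setOf_forall_mem_eq_compl_image_fst_compl]
  exact (isClosedMap_fst_of_compactSpace _ hW.isClosed_compl).isOpen_compl

theorem IsClopen.setOf_forall_mem {X Y : Type*} [TopologicalSpace X] [TopologicalSpace Y]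
    [CompactSpace Y] {W : Set (X × Y)} (hW : IsClopen W) :
    IsClopen {x : X | ∀ y : Y, (x, y) ∈ W} :=
  ⟨hW.isClosed.setOf_forall_mem, hW.isOpen.setOf_forall_mem⟩

theorem gc_preimage_fst_setOf_forall_mem {X Y : Type*} :
    GaloisConnection (fun U : Set X => Prod.fst ⁻¹' U)
      (fun W : Set (X × Y) => {x : X | ∀ y : Y, (x, y) ∈ W}) :=
  fun _ _ => ⟨fun h x hx y => h hx, fun h p hp => h hp p.2⟩

theorem pi_forall_clopen_and_adjoint_general {X Y : Type*}
    [TopologicalSpace X]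
    [TopologicalSpace Y] [CompactSpace Y]
    (W : Set (X × Y)) (hW : IsClopen W) :
    IsClopen {x : X | ∀ y : Y, (x, y) ∈ W} ∧
      ∀ U : Set X, IsClopen U →
        ((Prod.fst ⁻¹' U ⊆ W) ↔ U ⊆ {x : X | ∀ y : Y, (x, y) ∈ W}) :=
  ⟨hW.setOf_forall_mem, fun U _ => gc_preimage_fst_setOf_forall_mem U W⟩

/-- Universal quantification along the projection `X × Y → X` between Stone spaces:
`π_∀(W)` is clopen, and it is right adjoint to the preimage map on clopen sets. -/
theorem pi_forall_clopen_and_adjoint {X Y : Type*}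
    [TopologicalSpace X] [CompactSpace X] [T2Space X] [TotallyDisconnectedSpace X]
    [TopologicalSpace Y] [CompactSpace Y] [T2Space Y] [TotallyDisconnectedSpace Y]
    (W : Set (X × Y)) (hW : IsClopen W) :
    IsClopen {x : X | ∀ y : Y, (x, y) ∈ W} ∧
      ∀ U : Set X, IsClopen U →
        ((Prod.fst ⁻¹' U ⊆ W) ↔ U ⊆ {x : X | ∀ y : Y, (x, y) ∈ W}) :=
  pi_forall_clopen_and_adjoint_general W hW
end
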